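/- For any cellular automaton C (with standard radius-1 neighbourhood) and any constant T ∈ ℕ, there exists a cellular automaton C' such that for every input word w, C' accepts w at time |w| if and only if C accepts w at time |w| + T. (Constant acceleration: L_Id(C') = L_{Id+T}(C).) -/

import Mathlib

/-- A cellular automaton with radius-1 neighbourhood over the input alphabet `A` (playing the role of Σ). -/
structure CellAuto (A : Type) where
  Q : Type
  fin : Fintype Q
  embed : A → Q
  quiescent : Q
  accept : Set Q
  δ : Q → Q → Q → Q
  quiescent_fix : δ quiescent quiescent quiescent = quiescent

namespace CellAuto

variable {A : Type}

/-- One synchronous update step. -/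
def step (C : CellAuto A) (𝔠 : ℤ → C.Q) : ℤ → C.Q :=
  fun c => C.δ (𝔠 (c - 1)) (𝔠 c) (𝔠 (c + 1))

/-- The initial configuration associated to an input word `w`:
letters on cells `0, …, |w| - 1`, quiescent state elsewhere. -/
def initConfig (C : CellAuto A) (w : List A) : ℤ → C.Q :=
  fun c => if h : 0 ≤ c ∧ c < w.length
    then C.embed (w.get ⟨c.toNat, by omega⟩)
    else C.quiescent

/-- `C` accepts `w` at time `t` iff cell `0` is in an accepting state at time `t`. -/
def accepts (C : CellAuto A) (w : List A) (t : ℕ) : Prop :=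
  C.step^[t] (C.initConfig w) 0 ∈ C.accept

end CellAuto

/-!
Each cell of the accelerated automaton carries a window of radius `T` of partial knowledge of
the current row of the space-time diagram of `C`, updated by applying `δ` wherever its three
arguments are known. A cell whose light cone misses the input is `none`; next to a cell whose
light cone meets the input it knows on which side the input lies, so it may report everything
beyond it as quiescent. Knowledge thus flows inward from both ends of the input: a cell that has
seen the left end (`c < t`) knows the left half of its window, one that has seen the right end
(`|w| ≤ c + t`) the right half. At time `|w|` cell `0` has seen both, so it knows row `|w|` of
`C` on `[-T, T]`, and `T` further steps of `C` on that window give cell `0` at time `|w| + T`.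
-/

namespace CellAuto

variable {A : Type} (C : CellAuto A)

def diagram (w : List A) (t : ℕ) : ℤ → C.Q := C.step^[t] (C.initConfig w)

lemma diagram_zero (w : List A) : C.diagram w 0 = C.initConfig w := rfl

lemma diagram_succ (w : List A) (t : ℕ) (c : ℤ) :
    C.diagram w (t + 1) c =
      C.δ (C.diagram w t (c - 1)) (C.diagram w t c) (C.diagram w t (c + 1)) := by
  rw [diagram, Function.iterate_succ_apply']
  rfl

lemma diagram_add (w : List A) (t s : ℕ) :
    C.diagram w (t + s) = C.step^[s] (C.diagram w t) := by
  rw [diagram, add_comm, Function.iterate_add_apply, diagram]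

lemma iterate_step_congr (k : ℕ) (α β : ℤ → C.Q) (d : ℤ)
    (h : ∀ j, d - k ≤ j → j ≤ d + k → α j = β j) : C.step^[k] α d = C.step^[k] β d := by
  induction k generalizing α β with
  | zero => simpa using h d
  | succ k ih =>
    rw [Function.iterate_succ_apply, Function.iterate_succ_apply]
    refine ih _ _ fun j hj hj' => ?_
    simp only [step]
    push_cast at h
    rw [h (j - 1) (by omega) (by omega), h j (by omega) (by omega), h (j + 1) (by omega) (by omega)]

lemma iterate_step_quiescent (k : ℕ) :
    C.step^[k] (fun _ => C.quiescent) = fun _ => C.quiescent :=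
  Function.iterate_fixed (funext fun _ => C.quiescent_fix) k

lemma iterate_step_eq_quiescent (k : ℕ) (α : ℤ → C.Q) (d : ℤ)
    (h : ∀ j, d - k ≤ j → j ≤ d + k → α j = C.quiescent) : C.step^[k] α d = C.quiescent := by
  rw [iterate_step_congr C k α _ d h, iterate_step_quiescent]

lemma initConfig_of_not_mem {w : List A} {c : ℤ} (h : ¬(0 ≤ c ∧ c < w.length)) :
    C.initConfig w c = C.quiescent :=
  dif_neg h

lemma diagram_eq_quiescent {w : List A} {t : ℕ} {c : ℤ} (h : c + t < 0 ∨ w.length ≤ c - t) :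
    C.diagram w t c = C.quiescent :=
  iterate_step_eq_quiescent C t _ c fun j _ _ => C.initConfig_of_not_mem (by omega)

end CellAuto

namespace CellAuto.Speedup

def Approximates {α : Type} (f : ℤ → Option α) (ρ : ℤ → α) : Prop :=
  ∀ i, ∀ v ∈ f i, v = ρ i

lemma Approximates.or {α : Type} {f g : ℤ → Option α} {ρ : ℤ → α}
    (hf : Approximates f ρ) (hg : Approximates g ρ) : Approximates (fun i => (f i).or (g i)) ρ := by
  intro i v hv
  rcases Option.or_eq_some_iff.mp hv with h | ⟨-, h⟩
  exacts [hf i v h, hg i v h]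

variable {A : Type} (C : CellAuto A) (T : ℕ)

abbrev Window := Finset.Icc (-(T : ℤ)) T → Option C.Q

noncomputable instance : Fintype (Window C T) :=
  letI := C.fin
  inferInstance

variable {C T}

def lookup (g : Window C T) (j : ℤ) : Option C.Q :=
  if h : -(T : ℤ) ≤ j ∧ j ≤ T then g ⟨j, Finset.mem_Icc.mpr h⟩ else none

def Window.ofFun (f : ℤ → Option C.Q) : Window C T := fun j => f j

def Window.single (q : C.Q) : Window C T := Window.ofFun fun j => if j = 0 then some q else none

lemma lookup_ofFun (f : ℤ → Option C.Q) (j : ℤ) :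
    lookup (Window.ofFun (T := T) f) j = if -(T : ℤ) ≤ j ∧ j ≤ T then f j else none := by
  unfold lookup Window.ofFun
  split_ifs <;> simp_all

lemma lookup_single (q : C.Q) (j : ℤ) :
    lookup (Window.single (T := T) q) j = if j = 0 then some q else none := by
  rw [Window.single, lookup_ofFun]
  split_ifs <;> first | rfl | omega

def leftView : Option (Window C T) → ℤ → Option C.Q
  | some g, i => lookup g (i + 1)
  | none, i => if i < 0 then some C.quiescent else none

def rightView : Option (Window C T) → ℤ → Option C.Q
  | some g, i => lookup g (i - 1)
  | none, i => if 0 < i then some C.quiescent else none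

def centerView (l : Option (Window C T)) : Option (Window C T) → ℤ → Option C.Q
  | some g, i => lookup g i
  | none, i =>
    if l.isSome then (if 0 ≤ i then some C.quiescent else none)
    else (if i ≤ 0 then some C.quiescent else none)

def view (l x r : Option (Window C T)) (i : ℤ) : Option C.Q :=
  ((leftView l i).or (centerView l x i)).or (rightView r i)

variable (C) in
def applyRule (v : ℤ → Option C.Q) (j : ℤ) : Option C.Q :=
  (v (j - 1)).bind fun a => (v j).bind fun b => (v (j + 1)).map (C.δ a b)

def update (l x r : Option (Window C T)) : Option (Window C T) :=
  if l.isNone ∧ x.isNone ∧ r.isNone then none else some (Window.ofFun (applyRule C (view l x r)))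

def decode (s : Option (Window C T)) (j : ℤ) : C.Q :=
  (s.bind (lookup · j)).getD C.quiescent

variable (C T) in
noncomputable abbrev accel : CellAuto A where
  Q := Option (Window C T)
  fin := inferInstance
  embed a := some (Window.single (C.embed a))
  quiescent := none
  accept := {s | C.step^[T] (decode s) 0 ∈ C.accept}
  δ := update
  quiescent_fix := by simp [update]

section Rule

variable {l x r : Option (Window C T)} {i : ℤ}

lemma update_eq_none_iff : update l x r = none ↔ l = none ∧ x = none ∧ r = none := by
  unfold update
  split_ifs <;> simp_all

lemma eq_ofFun_of_update_eq_some {g : Window C T} (h : update l x r = some g) :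
    g = Window.ofFun (applyRule C (view l x r)) := by
  unfold update at h
  split_ifs at h
  exact (Option.some_injective _ h).symm

lemma applyRule_isSome {v : ℤ → Option C.Q} {j : ℤ}
    (h : ∀ i, j - 1 ≤ i → i ≤ j + 1 → (v i).isSome) : (applyRule C v j).isSome := by
  obtain ⟨a, ha⟩ := Option.isSome_iff_exists.mp (h (j - 1) le_rfl (by omega))
  obtain ⟨b, hb⟩ := Option.isSome_iff_exists.mp (h j (by omega) (by omega))
  obtain ⟨c, hc⟩ := Option.isSome_iff_exists.mp (h (j + 1) (by omega) le_rfl)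
  simp [applyRule, ha, hb, hc]

lemma Approximates.applyRule {v : ℤ → Option C.Q} {ρ : ℤ → C.Q} (h : Approximates v ρ) :
    Approximates (applyRule C v) fun j => C.δ (ρ (j - 1)) (ρ j) (ρ (j + 1)) := by
  intro j q hq
  simp only [CellAuto.Speedup.applyRule, Option.mem_def, Option.bind_eq_some_iff,
    Option.map_eq_some_iff] at hq
  obtain ⟨a, ha, b, hb, c, hc, rfl⟩ := hq
  rw [h _ a ha, h _ b hb, h _ c hc]

lemma view_isSome_of_left (h : (leftView l i).isSome) : (view l x r i).isSome := by
  simp [view, Option.isSome_or, h]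

lemma view_isSome_of_center (h : (centerView l x i).isSome) : (view l x r i).isSome := by
  simp [view, Option.isSome_or, h]

lemma view_isSome_of_right (h : (rightView r i).isSome) : (view l x r i).isSome := by
  simp [view, Option.isSome_or, h]

lemma leftView_isSome (hl : ∀ g ∈ l, (lookup g (i + 1)).isSome) (hi : i < 0) :
    (leftView l i).isSome := by
  cases l with
  | none => simp [leftView, hi]
  | some g => exact hl g rfl

lemma rightView_isSome (hr : ∀ g ∈ r, (lookup g (i - 1)).isSome) (hi : 0 < i) :
    (rightView r i).isSome := by
  cases r with
  | none => simp [rightView, hi]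
  | some g => exact hr g rfl

lemma centerView_zero_isSome (hx : ∀ g ∈ x, (lookup g 0).isSome) :
    (centerView l x 0).isSome := by
  cases x with
  | none => cases l <;> simp [centerView]
  | some g => exact hx g rfl

lemma leftView_approximates {ρ : ℤ → C.Q}
    (hsome : ∀ g ∈ l, ∀ j, ∀ q ∈ lookup g j, q = ρ (j - 1))
    (hnone : l = none → ∀ i < 0, ρ i = C.quiescent) : Approximates (leftView l) ρ := by
  intro i q hq
  cases l with
  | none =>
    simp only [leftView, Option.mem_def, Option.ite_none_right_eq_some, Option.some_inj] at hq
    rw [← hq.2, hnone rfl i hq.1]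
  | some g => simpa using hsome g rfl (i + 1) q hq

lemma rightView_approximates {ρ : ℤ → C.Q}
    (hsome : ∀ g ∈ r, ∀ j, ∀ q ∈ lookup g j, q = ρ (j + 1))
    (hnone : r = none → ∀ i > 0, ρ i = C.quiescent) : Approximates (rightView r) ρ := by
  intro i q hq
  cases r with
  | none =>
    simp only [rightView, Option.mem_def, Option.ite_none_right_eq_some, Option.some_inj] at hq
    rw [← hq.2, hnone rfl i hq.1]
  | some g => simpa using hsome g rfl (i - 1) q hq

lemma centerView_approximates {ρ : ℤ → C.Q} (hsome : ∀ g ∈ x, Approximates (lookup g) ρ)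
    (hright : x = none → l ≠ none → ∀ i ≥ 0, ρ i = C.quiescent)
    (hleft : x = none → l = none → ∀ i ≤ 0, ρ i = C.quiescent) :
    Approximates (centerView l x) ρ := by
  intro i q hq
  cases x with
  | none =>
    cases l with
    | none =>
      simp only [centerView, Option.isSome_none, Bool.false_eq_true, if_false, Option.mem_def,
        Option.ite_none_right_eq_some, Option.some_inj] at hq
      rw [← hq.2, hleft rfl rfl i hq.1]
    | some g =>
      simp only [centerView, Option.isSome_some, if_true, Option.mem_def,
        Option.ite_none_right_eq_some, Option.some_inj] at hq
      rw [← hq.2, hright rfl (by simp) i hq.1]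
  | some g => exact hsome g rfl i q hq

end Rule

section Diagram

variable (w : List A)

lemma accel_initConfig (c : ℤ) :
    (accel C T).initConfig w c =
      if 0 ≤ c ∧ c < w.length then some (Window.single (C.initConfig w c)) else none := by
  unfold initConfig
  split_ifs <;> rfl

lemma accel_diagram_succ (t : ℕ) (c : ℤ) :
    (accel C T).diagram w (t + 1) c =
      update ((accel C T).diagram w t (c - 1)) ((accel C T).diagram w t c)
        ((accel C T).diagram w t (c + 1)) :=
  diagram_succ _ w t c

lemma accel_diagram_eq_none_iff {w : List A} (hw : w ≠ []) (t : ℕ) (c : ℤ) :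
    (accel C T).diagram w t c = none ↔ c + t < 0 ∨ w.length ≤ c - t := by
  induction t generalizing c with
  | zero =>
    rw [diagram_zero, accel_initConfig]
    split_ifs <;> simp <;> omega
  | succ t ih =>
    have := List.length_pos_iff.mpr hw
    rw [accel_diagram_succ, update_eq_none_iff, ih, ih, ih]
    push_cast
    omega

lemma lookup_zero_isSome (t : ℕ) (c : ℤ) :
    ∀ g ∈ (accel C T).diagram w t c, (lookup g 0).isSome := by
  induction t generalizing c with
  | zero =>
    intro g hg
    rw [Option.mem_def, diagram_zero, accel_initConfig] at hg
    split_ifs at hg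
    cases hg
    simp [lookup_single]
  | succ t ih =>
    intro g hg
    rw [Option.mem_def, accel_diagram_succ] at hg
    rw [eq_ofFun_of_update_eq_some hg, lookup_ofFun, if_pos (by omega)]
    refine applyRule_isSome fun i hi hi' => ?_
    obtain rfl | rfl | rfl : i = -1 ∨ i = 0 ∨ i = 1 := by omega
    · exact view_isSome_of_left (leftView_isSome (ih (c - 1)) (by omega))
    · exact view_isSome_of_center (centerView_zero_isSome (ih c))
    · exact view_isSome_of_right (rightView_isSome (ih (c + 1)) (by omega))

lemma lookup_isSome_of_lt (t : ℕ) (c : ℤ) (hc : c < t) :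
    ∀ g ∈ (accel C T).diagram w t c, ∀ j, -(T : ℤ) ≤ j → j ≤ 0 → (lookup g j).isSome := by
  induction t generalizing c with
  | zero =>
    intro g hg
    rw [Option.mem_def, diagram_zero, accel_initConfig, if_neg (by omega)] at hg
    cases hg
  | succ t ih =>
    intro g hg j hj hj'
    rw [Option.mem_def, accel_diagram_succ] at hg
    rw [eq_ofFun_of_update_eq_some hg, lookup_ofFun, if_pos (by omega)]
    refine applyRule_isSome fun i hi hi' => ?_
    obtain hi₀ | rfl | rfl : i < 0 ∨ i = 0 ∨ i = 1 := by omega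
    · exact view_isSome_of_left <| leftView_isSome
        (fun g' hg' => ih (c - 1) (by omega) g' hg' (i + 1) (by omega) (by omega)) hi₀
    · exact view_isSome_of_center (centerView_zero_isSome (lookup_zero_isSome w t c))
    · exact view_isSome_of_right (rightView_isSome (lookup_zero_isSome w t (c + 1)) (by omega))

lemma lookup_isSome_of_length_le (t : ℕ) (c : ℤ) (hc : w.length ≤ c + t) :
    ∀ g ∈ (accel C T).diagram w t c, ∀ j, 0 ≤ j → j ≤ (T : ℤ) → (lookup g j).isSome := by
  induction t generalizing c with
  | zero =>
    intro g hg
    rw [Option.mem_def, diagram_zero, accel_initConfig, if_neg (by omega)] at hg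
    cases hg
  | succ t ih =>
    intro g hg j hj hj'
    rw [Option.mem_def, accel_diagram_succ] at hg
    rw [eq_ofFun_of_update_eq_some hg, lookup_ofFun, if_pos (by omega)]
    refine applyRule_isSome fun i hi hi' => ?_
    obtain rfl | rfl | hi₀ : i = -1 ∨ i = 0 ∨ 0 < i := by omega
    · exact view_isSome_of_left (leftView_isSome (lookup_zero_isSome w t (c - 1)) (by omega))
    · exact view_isSome_of_center (centerView_zero_isSome (lookup_zero_isSome w t c))
    · exact view_isSome_of_right <| rightView_isSome
        (fun g' hg' => ih (c + 1) (by push_cast at hc; omega) g' hg' (i - 1) (by omega) (by omega)) hi₀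

lemma lookup_approximates {w : List A} (hw : w ≠ []) (t : ℕ) (c : ℤ) :
    ∀ g ∈ (accel C T).diagram w t c,
      Approximates (lookup g) fun j => C.diagram w t (c + j) := by
  induction t generalizing c with
  | zero =>
    intro g hg j q hq
    rw [Option.mem_def, diagram_zero, accel_initConfig] at hg
    split_ifs at hg
    cases hg
    rw [Option.mem_def, lookup_single] at hq
    split_ifs at hq with hj
    cases hq
    simp [hj, diagram_zero]
  | succ t ih =>
    intro g hg
    rw [Option.mem_def, accel_diagram_succ] at hg
    have hne := mt update_eq_none_iff.mpr (by rw [hg]; simp)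
    simp only [accel_diagram_eq_none_iff hw] at hne
    have hview : Approximates (view ((accel C T).diagram w t (c - 1)) ((accel C T).diagram w t c)
        ((accel C T).diagram w t (c + 1))) fun i => C.diagram w t (c + i) := by
      refine (Approximates.or (leftView_approximates ?_ ?_) (centerView_approximates ?_ ?_ ?_)).or
        (rightView_approximates ?_ ?_)
      · exact fun g' hg' j q hq => (ih _ g' hg' j q hq).trans (by ring_nf)
      · intro hl i hi
        rw [accel_diagram_eq_none_iff hw] at hl
        exact diagram_eq_quiescent C (by omega)
      · exact ih c
      · intro hx hl i hi
        rw [Ne, accel_diagram_eq_none_iff hw] at hl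
        rw [accel_diagram_eq_none_iff hw] at hx
        exact diagram_eq_quiescent C (by omega)
      · intro hx hl i hi
        rw [accel_diagram_eq_none_iff hw] at hx hl
        exact diagram_eq_quiescent C (by omega)
      · exact fun g' hg' j q hq => (ih _ g' hg' j q hq).trans (by ring_nf)
      · intro hr i hi
        rw [accel_diagram_eq_none_iff hw] at hr
        exact diagram_eq_quiescent C (by omega)
    intro j q hq
    rw [eq_ofFun_of_update_eq_some hg, Option.mem_def, lookup_ofFun] at hq
    split_ifs at hq
    rw [hview.applyRule j q hq]
    beta_reduce
    rw [diagram_succ, add_sub_assoc, add_assoc]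

lemma decode_diagram_length (w : List A) (j : ℤ) (hj : -(T : ℤ) ≤ j) (hj' : j ≤ T) :
    decode ((accel C T).diagram w w.length 0) j = C.diagram w w.length j := by
  rcases eq_or_ne w [] with rfl | hw
  · simp [decode, diagram_zero, initConfig]
  have hn := List.length_pos_iff.mpr hw
  obtain ⟨g, hg⟩ : ∃ g, (accel C T).diagram w w.length 0 = some g :=
    Option.ne_none_iff_exists'.mp
      (by rw [Ne, accel_diagram_eq_none_iff hw]; omega)
  have hknown : (lookup g j).isSome := by
    rcases le_or_gt j 0 with hj₀ | hj₀
    · exact lookup_isSome_of_lt w _ 0 (by omega) g hg j hj hj₀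
    · exact lookup_isSome_of_length_le w _ 0 (by simp) g hg j hj₀.le hj'
  obtain ⟨q, hq⟩ := Option.isSome_iff_exists.mp hknown
  simp [decode, hg, hq, lookup_approximates hw _ 0 g hg j q hq]

end Diagram

end CellAuto.Speedup

theorem stmt_8_general (A : Type) (C : CellAuto A) (T : ℕ) :
    ∃ C' : CellAuto A, ∀ w : List A,
      C'.accepts w w.length ↔ C.accepts w (w.length + T) := by
  open CellAuto.Speedup in
  refine ⟨accel C T, fun w => ?_⟩
  have h : C.step^[T] (decode ((accel C T).diagram w w.length 0)) 0 =
      C.diagram w (w.length + T) 0 := by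
    rw [C.diagram_add]
    exact C.iterate_step_congr T _ _ 0 fun j hj hj' =>
      decode_diagram_length w j (by omega) (by omega)
  exact Iff.of_eq (congrArg (· ∈ C.accept) h)

/-- Constant acceleration: for every cellular automaton `C` and constant `T`,
there is a cellular automaton `C'` accepting in real time exactly the words
that `C` accepts in time `|w| + T`, i.e. `L_Id(C') = L_{Id+T}(C)`. -/
theorem stmt_8 (A : Type) [Fintype A] (C : CellAuto A) (T : ℕ) :
    ∃ C' : CellAuto A, ∀ w : List A,
      C'.accepts w w.length ↔ C.accepts w (w.length + T) :=
  stmt_8_general A C T
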